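/- arXiv:2305.15547 — 2 statements merged into one kernel-verified Lean document; each statement's English description precedes it below -/
import Mathlib

section
/- Work with N spin-1/2 particles in the matrix algebra M_N, with bath dissipator D_bath[X] := ∑_k (Γ↓ W_{σ₋^{(k)}}[X] + Γ↑ W_{σ₊^{(k)}}[X]). Then D_bath[S₋] = −((Γ↓ + Γ↑)/2) · S₋, where S₋ := ∑_k σ₋^{(k)}. -/
open Matrix

/-- The Pauli lowering operator `σ₋`. -/
def σm : Matrix (Fin 2) (Fin 2) ℂ := !![0, 0; 1, 0]

/-- The Pauli raising operator `σ₊`. -/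
def σp : Matrix (Fin 2) (Fin 2) ℂ := !![0, 1; 0, 0]

/-- The Pauli matrix `σ_z`. -/
def σz : Matrix (Fin 2) (Fin 2) ℂ := !![1, 0; 0, -1]

/-- Embedding of a single-spin operator `m` at site `k` of an `N`-spin system:
`m^{(k)} f g = m (f k) (g k)` if `f j = g j` for all `j ≠ k`, and `0` otherwise. -/
def embed {N : ℕ} (m : Matrix (Fin 2) (Fin 2) ℂ) (k : Fin N) :
    Matrix (Fin N → Fin 2) (Fin N → Fin 2) ℂ :=
  fun f g => if ∀ j, j ≠ k → f j = g j then m (f k) (g k) else 0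

/-- The collective lowering operator `S₋ = ∑ₖ σ₋^{(k)}`. -/
noncomputable def Sminus (N : ℕ) : Matrix (Fin N → Fin 2) (Fin N → Fin 2) ℂ := ∑ k, embed σm k

/-- The collective raising operator `S₊ = ∑ₖ σ₊^{(k)}`. -/
noncomputable def Splus (N : ℕ) : Matrix (Fin N → Fin 2) (Fin N → Fin 2) ℂ := ∑ k, embed σp k

/-- The collective operator `S_z = ∑ₖ σ_z^{(k)}`. -/
noncomputable def Sz (N : ℕ) : Matrix (Fin N → Fin 2) (Fin N → Fin 2) ℂ := ∑ k, embed σz k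

/-- The Heisenberg-picture jump map `W_ν[X] = νᴴ X ν - (νᴴ ν X + X νᴴ ν)/2` on the
`N`-spin algebra. -/
noncomputable def WmapN {N : ℕ} (ν X : Matrix (Fin N → Fin 2) (Fin N → Fin 2) ℂ) :
    Matrix (Fin N → Fin 2) (Fin N → Fin 2) ℂ :=
  νᴴ * X * ν - (2 : ℂ)⁻¹ • (νᴴ * ν * X + X * (νᴴ * ν))

/-- The bath dissipator `D_bath[X] = ∑ₖ (Γ↓ W_{σ₋^{(k)}}[X] + Γ↑ W_{σ₊^{(k)}}[X])`. -/
noncomputable def Dbath (N : ℕ) (Γd Γu : ℝ)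
    (X : Matrix (Fin N → Fin 2) (Fin N → Fin 2) ℂ) :
    Matrix (Fin N → Fin 2) (Fin N → Fin 2) ℂ :=
  ∑ k, ((Γd : ℂ) • WmapN (embed σm k) X + (Γu : ℂ) • WmapN (embed σp k) X)

/-!
Single-site operators at different sites commute, and `W_ν[X] = 0` whenever `X` commutes with
`ν` and `νᴴ`. Hence in `W_{ν^{(k)}}[S₋]` only the term `σ₋^{(k)}` survives, and the embedding
`m ↦ m^{(k)}` is a `*`-homomorphism, so everything reduces to the `2 × 2` identities
`W_{σ₋}[σ₋] = W_{σ₊}[σ₋] = -σ₋/2`.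
-/

open Function

/-- `W_ν` on any full matrix algebra; `WmapN` is definitionally its instance on the spin algebra. -/
noncomputable def Wmap {n : Type*} [Fintype n] (ν X : Matrix n n ℂ) : Matrix n n ℂ :=
  νᴴ * X * ν - (2 : ℂ)⁻¹ • (νᴴ * ν * X + X * (νᴴ * ν))

section Wmap

variable {n : Type*} [Fintype n]

theorem Wmap_sum {ι : Type*} (s : Finset ι) (ν : Matrix n n ℂ) (X : ι → Matrix n n ℂ) :
    Wmap ν (∑ i ∈ s, X i) = ∑ i ∈ s, Wmap ν (X i) := by
  simp only [Wmap, Finset.mul_sum, Finset.sum_mul, ← Finset.sum_add_distrib, Finset.smul_sum,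
    Finset.sum_sub_distrib]

theorem Wmap_eq_zero_of_commute {ν X : Matrix n n ℂ} (h : Commute X ν) (hH : Commute X νᴴ) :
    Wmap ν X = 0 := by
  have hL : νᴴ * X * ν = X * (νᴴ * ν) := by rw [← hH.eq, mul_assoc]
  have hR : νᴴ * ν * X = X * (νᴴ * ν) := by rw [mul_assoc, ← h.eq, ← mul_assoc, hL]
  rw [Wmap, hL, hR, ← two_smul ℂ, smul_smul, inv_mul_cancel₀ two_ne_zero, one_smul, sub_self]

end Wmap

section embed

variable {N : ℕ}

theorem embed_apply_eq_sum (m : Matrix (Fin 2) (Fin 2) ℂ) (k : Fin N) (f h : Fin N → Fin 2) :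
    embed m k f h = ∑ i, if update f k i = h then m (f k) i else 0 := by
  rw [embed]
  split_ifs with hfh <;> simp +contextual [update_eq_iff, hfh]

theorem embed_mul_apply (m : Matrix (Fin 2) (Fin 2) ℂ) (k : Fin N)
    (B : Matrix (Fin N → Fin 2) (Fin N → Fin 2) ℂ) (f g : Fin N → Fin 2) :
    (embed m k * B) f g = ∑ i, m (f k) i * B (update f k i) g := by
  simp only [Matrix.mul_apply, embed_apply_eq_sum, Finset.sum_mul, ite_mul, zero_mul]
  rw [Finset.sum_comm]
  simp

theorem embed_mul_embed (m m' : Matrix (Fin 2) (Fin 2) ℂ) (k : Fin N) :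
    embed m k * embed m' k = embed (m * m') k := by
  ext f g
  have hcond : ∀ i, (∀ j, j ≠ k → update f k i j = g j) ↔ ∀ j, j ≠ k → f j = g j :=
    fun i => forall₂_congr fun j hj => by rw [update_of_ne hj]
  simp only [embed_mul_apply, embed, update_self, hcond]
  split_ifs <;> simp [Matrix.mul_apply]

theorem embed_commute (m m' : Matrix (Fin 2) (Fin 2) ℂ) {k j : Fin N} (hkj : k ≠ j) :
    Commute (embed m k) (embed m' j) := by
  show _ * _ = _ * _
  ext f g
  -- expanding both sides twice with `embed_mul_apply` gives the same double sum
  calc (embed m k * embed m' j) f g = (embed m k * (embed m' j * 1) : Matrix _ _ ℂ) f g := by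
        rw [mul_one]
    _ = (embed m' j * (embed m k * 1) : Matrix _ _ ℂ) f g := by
      simp only [embed_mul_apply, update_of_ne hkj, update_of_ne hkj.symm, Finset.mul_sum,
        mul_left_comm (m (f k) _)]
      rw [Finset.sum_comm]
      refine Finset.sum_congr rfl fun i _ => Finset.sum_congr rfl fun i' _ => ?_
      rw [update_comm hkj]
    _ = (embed m' j * embed m k) f g := by rw [mul_one]

theorem conjTranspose_embed (m : Matrix (Fin 2) (Fin 2) ℂ) (k : Fin N) :
    (embed m k)ᴴ = embed mᴴ k := by
  ext f g
  simp only [conjTranspose_apply, embed, apply_ite star, star_zero]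
  simp only [eq_comm (a := g _)]

theorem embed_add (m m' : Matrix (Fin 2) (Fin 2) ℂ) (k : Fin N) :
    embed (m + m') k = embed m k + embed m' k := by
  ext f g; simp only [embed, Matrix.add_apply]; split_ifs <;> simp

theorem embed_sub (m m' : Matrix (Fin 2) (Fin 2) ℂ) (k : Fin N) :
    embed (m - m') k = embed m k - embed m' k := by
  ext f g; simp only [embed, Matrix.sub_apply]; split_ifs <;> simp

theorem embed_smul (a : ℂ) (m : Matrix (Fin 2) (Fin 2) ℂ) (k : Fin N) :
    embed (a • m) k = a • embed m k := by
  ext f g; simp only [embed, Matrix.smul_apply]; split_ifs <;> simp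

theorem WmapN_embed_embed (ν X : Matrix (Fin 2) (Fin 2) ℂ) (k : Fin N) :
    WmapN (embed ν k) (embed X k) = embed (Wmap ν X) k := by
  simp only [WmapN, Wmap, conjTranspose_embed, embed_mul_embed, embed_add, embed_sub, embed_smul]

theorem WmapN_embed_sum_embed (ν X : Matrix (Fin 2) (Fin 2) ℂ) (k : Fin N) :
    WmapN (embed ν k) (∑ j, embed X j) = embed (Wmap ν X) k := by
  change Wmap _ _ = _
  rw [Wmap_sum, Finset.sum_eq_single_of_mem k (Finset.mem_univ k)]
  · exact WmapN_embed_embed ν X k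
  · intro j _ hjk
    refine Wmap_eq_zero_of_commute (embed_commute _ _ hjk) ?_
    rw [conjTranspose_embed]
    exact embed_commute _ _ hjk

end embed

theorem conjTranspose_σm : σmᴴ = σp := by
  ext i j; fin_cases i <;> fin_cases j <;> simp [σm, σp]

theorem conjTranspose_σp : σpᴴ = σm := by
  rw [← conjTranspose_σm, conjTranspose_conjTranspose]

theorem Wmap_σm_σm : Wmap σm σm = -(2 : ℂ)⁻¹ • σm := by
  rw [Wmap, conjTranspose_σm]
  simp only [σm, σp, Matrix.mul_fin_two]
  ext i j; fin_cases i <;> fin_cases j <;> simp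

theorem Wmap_σp_σm : Wmap σp σm = -(2 : ℂ)⁻¹ • σm := by
  rw [Wmap, conjTranspose_σp]
  simp only [σm, σp, Matrix.mul_fin_two]
  ext i j; fin_cases i <;> fin_cases j <;> simp

/-- `D_bath[S₋] = -((Γ↓ + Γ↑)/2) S₋`. -/
theorem dbath_Sminus (N : ℕ) (Γd Γu : ℝ) :
    Dbath N Γd Γu (Sminus N) = -(((Γd + Γu) / 2 : ℝ) : ℂ) • Sminus N := by
  simp only [Dbath, Sminus, WmapN_embed_sum_embed, Wmap_σm_σm, Wmap_σp_σm, embed_smul,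
    smul_smul, ← add_smul, Finset.smul_sum]
  congr 1; ext1 k; congr 1
  push_cast
  ring
end

section
/- Let A be an associative unital algebra over ℂ and let a, b ∈ A satisfy a*b − b*a = 1. For κ↓, κ↑ ∈ ℂ define D̃[X] := κ↓·(b*X*a − (b*a*X + X*b*a)/2) + κ↑·(a*X*b − (a*b*X + X*a*b)/2). Then for all natural numbers m, n: D̃[bᵐ * aⁿ] = −((κ↓ − κ↑)·(m + n)/2) · bᵐ * aⁿ + κ↑ · (m·n) · b^(m−1) * a^(n−1), where the last term is understood to vanish when m = 0 or n = 0 (its coefficient m·n is then zero). -/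
/-!
Write `N = b * a` and `X = bᵐ * aⁿ`. The relation `a * b = b * a + 1` gives
`N * bᵐ = bᵐ * N + m • bᵐ` and `aⁿ * N = N * aⁿ + n • aⁿ`, so `N * X` and `X * N` are both
`bᵐ * N * aⁿ` up to multiples of `X`, and so is the jump term `b * X * a = bᵐ * N * aⁿ`.
Only the other jump term `a * X * b` produces something new: expanding
`a * bᵐ = bᵐ * a + m • b ^ (m - 1)` and `aⁿ * b = b * aⁿ + n • a ^ (n - 1)` yields the
cross term `(m * n) • (b ^ (m - 1) * a ^ (n - 1))`.
-/

theorem nsmul_mul_pow_pred {R : Type*} [Semiring R] (x : R) (n : ℕ) :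
    n • (x * x ^ (n - 1)) = n • x ^ n := by
  rcases eq_or_ne n 0 with rfl | hn
  · simp
  · rw [mul_pow_sub_one hn]

theorem nsmul_pow_pred_mul {R : Type*} [Semiring R] (x : R) (n : ℕ) :
    n • (x ^ (n - 1) * x) = n • x ^ n := by
  rw [pow_mul_comm', nsmul_mul_pow_pred]

namespace CanonicalCommutation

variable {R : Type*} [Semiring R] {a b : R}

theorem mul_pow_eq_pow_mul_add_nsmul (hab : a * b = b * a + 1) (m : ℕ) :
    a * b ^ m = b ^ m * a + m • b ^ (m - 1) := by
  induction m with
  | zero => simp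
  | succ k ih =>
    rw [pow_succ, ← mul_assoc, ih, add_mul, smul_mul_assoc, nsmul_pow_pred_mul, mul_assoc, hab,
      mul_add, mul_one, ← mul_assoc, ← pow_succ, Nat.add_sub_cancel, succ_nsmul]
    abel

theorem pow_mul_eq_mul_pow_add_nsmul (hab : a * b = b * a + 1) (n : ℕ) :
    a ^ n * b = b * a ^ n + n • a ^ (n - 1) := by
  -- In the opposite ring, `op b` and `op a` satisfy the same relation.
  have hop : MulOpposite.op b * MulOpposite.op a = MulOpposite.op a * MulOpposite.op b + 1 := by
    rw [← MulOpposite.op_mul, ← MulOpposite.op_mul, hab, MulOpposite.op_add, MulOpposite.op_one]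
  apply MulOpposite.op_injective
  simpa only [MulOpposite.op_mul, MulOpposite.op_add, MulOpposite.op_smul, MulOpposite.op_pow]
    using mul_pow_eq_pow_mul_add_nsmul hop n

theorem mul_mul_pow_eq_pow_mul_mul_add (hab : a * b = b * a + 1) (m : ℕ) :
    b * a * b ^ m = b ^ m * (b * a) + m • b ^ m := by
  rw [mul_assoc, mul_pow_eq_pow_mul_add_nsmul hab, mul_add, mul_smul_comm, nsmul_mul_pow_pred,
    ← mul_assoc, ← pow_mul_comm', mul_assoc]

theorem pow_mul_mul_eq_mul_mul_pow_add (hab : a * b = b * a + 1) (n : ℕ) :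
    a ^ n * (b * a) = b * a * a ^ n + n • a ^ n := by
  rw [← mul_assoc, pow_mul_eq_mul_pow_add_nsmul hab, add_mul, smul_mul_assoc, nsmul_pow_pred_mul,
    mul_assoc, pow_mul_comm', ← mul_assoc]

theorem mul_mul_monomial (hab : a * b = b * a + 1) (m n : ℕ) :
    b * a * (b ^ m * a ^ n) = b ^ (m + 1) * a ^ (n + 1) + m • (b ^ m * a ^ n) := by
  rw [← mul_assoc, mul_mul_pow_eq_pow_mul_mul_add hab, add_mul, smul_mul_assoc, pow_succ,
    pow_succ']
  simp only [mul_assoc]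

theorem monomial_mul_mul (hab : a * b = b * a + 1) (m n : ℕ) :
    b ^ m * a ^ n * (b * a) = b ^ (m + 1) * a ^ (n + 1) + n • (b ^ m * a ^ n) := by
  rw [mul_assoc, pow_mul_mul_eq_mul_mul_pow_add hab, mul_add, mul_smul_comm, pow_succ, pow_succ']
  simp only [mul_assoc]

theorem mul_monomial_mul (hab : a * b = b * a + 1) (m n : ℕ) :
    a * (b ^ m * a ^ n) * b = b ^ (m + 1) * a ^ (n + 1) + (m + n + 1) • (b ^ m * a ^ n)
      + (m * n) • (b ^ (m - 1) * a ^ (n - 1)) := by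
  calc a * (b ^ m * a ^ n) * b = (a * b ^ m) * (a ^ n * b) := by simp only [mul_assoc]
    _ = (b ^ m * a + m • b ^ (m - 1)) * (b * a ^ n + n • a ^ (n - 1)) := by
      rw [mul_pow_eq_pow_mul_add_nsmul hab, pow_mul_eq_mul_pow_add_nsmul hab]
    _ = b ^ m * (a * b) * a ^ n + b ^ m * (n • (a * a ^ (n - 1)))
          + (m • (b ^ (m - 1) * b)) * a ^ n + (m * n) • (b ^ (m - 1) * a ^ (n - 1)) := by
      simp only [add_mul, mul_add, smul_mul_assoc, mul_smul_comm, smul_add, smul_smul, mul_assoc,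
        mul_comm n m]
      abel
    _ = _ := by
      rw [hab, nsmul_mul_pow_pred, nsmul_pow_pred_mul, pow_succ, pow_succ']
      simp only [add_mul, mul_add, mul_one, smul_mul_assoc, mul_smul_comm, mul_assoc, add_nsmul,
        one_nsmul]
      abel

end CanonicalCommutation

open CanonicalCommutation in
/-- Action of the emergent bosonic dissipator `D̃ = κ↓ W_a + κ↑ W_b` (with `b` playing
the role of the creation operator, `[a, b] = 1`) on normal-ordered monomials:
`D̃[bᵐ aⁿ] = -((κ↓ - κ↑)(m + n)/2) bᵐ aⁿ + κ↑ m n b^{m-1} a^{n-1}`. -/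
theorem bosonic_dissipator_monomials {A : Type*} [Ring A] [Algebra ℂ A]
    (a b : A) (hab : a * b - b * a = 1) (κd κu : ℂ) (D : A → A)
    (hD : ∀ X, D X = κd • (b * X * a - (2 : ℂ)⁻¹ • (b * a * X + X * (b * a)))
                   + κu • (a * X * b - (2 : ℂ)⁻¹ • (a * b * X + X * (a * b))))
    (m n : ℕ) :
    D (b ^ m * a ^ n)
      = (-((κd - κu) * ((m : ℂ) + (n : ℂ)) / 2)) • (b ^ m * a ^ n)
        + (κu * ((m : ℂ) * (n : ℂ))) • (b ^ (m - 1) * a ^ (n - 1)) := by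
  have hab' : a * b = b * a + 1 := sub_eq_iff_eq_add'.mp hab
  have hsandwich : b * (b ^ m * a ^ n) * a = b ^ (m + 1) * a ^ (n + 1) := by
    rw [pow_succ', pow_succ]
    simp only [mul_assoc]
  rw [hD, mul_monomial_mul hab', hab', add_mul, mul_add, one_mul, mul_one, mul_mul_monomial hab',
    monomial_mul_mul hab', hsandwich]
  simp only [← Nat.cast_smul_eq_nsmul ℂ]
  push_cast
  module
end
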